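/- Every fair non-special finite multiset of exactly 6 triples admits a nice two-coloring. -/

import Mathlib

/-- `f` is a *nice (total) `c`-coloring* of the multiset `T` of tuples: the color
classes `f j` sum to `T`, and for each color `j` and every element `i` appearing in
some tuple of `T` there is a tuple of color `j` not containing `i`. -/
def NiceColoring (c : ℕ) (T : Multiset (Finset ℕ+))
    (f : Fin c → Multiset (Finset ℕ+)) : Prop :=
  (∑ j, f j) = T ∧
  ∀ j : Fin c, ∀ i : ℕ+, (∃ t ∈ T, i ∈ t) → ∃ t ∈ f j, i ∉ t

/-- `T` is *`c`-fair*: every element appearing in some tuple of `T` is absent from at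
least `c` of the tuples (counted with multiplicity). -/
def CFair (c : ℕ) (T : Multiset (Finset ℕ+)) : Prop :=
  ∀ i : ℕ+, (∃ t ∈ T, i ∈ t) →
    c ≤ Multiset.card (T.filter (fun t => i ∉ t))

/-- A multiset `T` of `n` triples is *special*: for some three distinct elements
`a, b, c` it consists of `n - 3` copies of the triple `{a, b, c}` together with three
further triples, one containing `a`, one containing `b` and one containing `c`, whose
other elements are distinct from `a`, `b`, `c`. -/
def Special (T : Multiset (Finset ℕ+)) : Prop :=
  ∃ a b c : ℕ+, a ≠ b ∧ a ≠ c ∧ b ≠ c ∧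
    ∃ t₁ t₂ t₃ : Finset ℕ+,
      T = Multiset.replicate (Multiset.card T - 3) {a, b, c} + {t₁, t₂, t₃} ∧
      a ∈ t₁ ∧ b ∉ t₁ ∧ c ∉ t₁ ∧
      a ∉ t₂ ∧ b ∈ t₂ ∧ c ∉ t₂ ∧
      a ∉ t₃ ∧ b ∉ t₃ ∧ c ∈ t₃

namespace SixTriples

def bitt (i m : ℕ) : Bool := m / 2 ^ i % 2 == 1
def subM (a b : ℕ) : Bool := a &&& b == a
def popc (m : ℕ) : ℕ := (List.range 6).countP (fun i => bitt i m)
def allSubs : List ℕ := (List.range 64).filter (fun m => 2 ≤ popc m && popc m ≤ 4)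
def splitsL : List ℕ :=
  (List.range 64).filter (fun m => popc m == 3 && bitt 0 m) ++
  (List.range 64).filter (fun m => popc m == 2)
def colsok (ch : List ℕ) : Bool :=
  (List.range 6).all fun i => Nat.ble (ch.countP (fun s => bitt i s)) 3
def partsL : List (ℕ×ℕ×ℕ×ℕ×ℕ×ℕ) :=
  [(0,1,2,3,4,5), (0,1,3,2,4,5), (0,1,4,2,3,5), (0,1,5,2,3,4), (0,2,3,1,4,5),
   (0,2,4,1,3,5), (0,2,5,1,3,4), (0,3,4,1,2,5), (0,3,5,1,2,4), (0,4,5,1,2,3),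
   (1,2,3,0,4,5), (1,2,4,0,3,5), (1,2,5,0,3,4), (1,3,4,0,2,5), (1,3,5,0,2,4),
   (1,4,5,0,2,3), (2,3,4,0,1,5), (2,3,5,0,1,4), (2,4,5,0,1,3), (3,4,5,0,1,2)]
def mask4 (i j k p : ℕ) : ℕ := 2 ^ i + 2 ^ j + 2 ^ k + 2 ^ p
def goodK (ch : List ℕ) : Bool :=
  partsL.any fun e =>
    ch.contains (mask4 e.1 e.2.1 e.2.2.1 e.2.2.2.1) &&
    ch.contains (mask4 e.1 e.2.1 e.2.2.1 e.2.2.2.2.1) &&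
    ch.contains (mask4 e.1 e.2.1 e.2.2.1 e.2.2.2.2.2)
def check : List ℕ → List ℕ → Bool
  | [], ch => goodK ch
  | A :: L, ch =>
      if ch.any (fun s => subM A s || subM (63 - A) s) then check L ch
      else allSubs.all fun s =>
        !((subM A s || subM (63 - A) s) && colsok (s :: ch)) || check L (s :: ch)

set_option maxHeartbeats 4000000 in
theorem check_true : check splitsL [] = true := by decide

theorem check_complete (P : ℕ → Prop)
    (h1 : ∀ m, P m → m ∈ allSubs)
    (h2 : ∀ i, i < 6 → ∀ l : List ℕ, l.Nodup →
      (∀ m ∈ l, P m ∧ bitt i m = true) → l.length ≤ 3) :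
    ∀ (L ch : List ℕ), check L ch = true →
    (∀ A ∈ L, (∃ m, P m ∧ subM A m = true) ∨ (∃ m, P m ∧ subM (63-A) m = true)) →
    (∀ m ∈ ch, P m) → ch.Nodup →
    ∃ e ∈ partsL, P (mask4 e.1 e.2.1 e.2.2.1 e.2.2.2.1) ∧
      P (mask4 e.1 e.2.1 e.2.2.1 e.2.2.2.2.1) ∧
      P (mask4 e.1 e.2.1 e.2.2.1 e.2.2.2.2.2) := by
  intro L
  induction L with
  | nil =>
    intro ch hck _ hch _
    have hg : goodK ch = true := hck
    rw [goodK, List.any_eq_true] at hg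
    obtain ⟨e, he, hmem⟩ := hg
    simp only [Bool.and_eq_true] at hmem
    obtain ⟨⟨hm1, hm2⟩, hm3⟩ := hmem
    exact ⟨e, he, hch _ (by simpa using hm1), hch _ (by simpa using hm2),
      hch _ (by simpa using hm3)⟩
  | cons A L ih =>
    intro ch hck hbl hch hnd
    by_cases hb : (ch.any (fun s => subM A s || subM (63 - A) s)) = true
    · have hck' : check L ch = true := by
        rw [check, if_pos hb] at hck; exact hck
      exact ih ch hck' (fun B hB => hbl B (List.mem_cons_of_mem _ hB)) hch hnd
    · obtain ⟨S, hPS, hsub⟩ : ∃ m, P m ∧ (subM A m = true ∨ subM (63-A) m = true) := by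
        rcases hbl A List.mem_cons_self with ⟨m, hm, hs⟩ | ⟨m, hm, hs⟩
        · exact ⟨m, hm, Or.inl hs⟩
        · exact ⟨m, hm, Or.inr hs⟩
      have hSch : S ∉ ch := by
        intro hmem
        apply hb
        rw [List.any_eq_true]
        exact ⟨S, hmem, by rcases hsub with h | h <;> simp [h]⟩
      have hcols : colsok (S :: ch) = true := by
        by_contra hc
        rw [colsok, List.all_eq_true] at hc
        push_neg at hc
        obtain ⟨i, hi, hgt⟩ := hc
        have hi6 : i < 6 := List.mem_range.mp hi
        have hgt' : 3 < (S :: ch).countP (fun s => bitt i s) := by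
          rcases Nat.lt_or_ge 3 ((S :: ch).countP (fun s => bitt i s)) with h | h
          · exact h
          · exact absurd (by simpa using h) hgt
        have hlen := h2 i hi6 ((S :: ch).filter (fun s => bitt i s))
          ((List.nodup_cons.mpr ⟨hSch, hnd⟩).filter _)
          (by
            intro m hm
            rw [List.mem_filter] at hm
            refine ⟨?_, hm.2⟩
            rcases List.mem_cons.mp hm.1 with rfl | h
            · exact hPS
            · exact hch m h)
        rw [← List.countP_eq_length_filter] at hlen
        omega
      have hSall : S ∈ allSubs := h1 S hPS
      have hck' : check L (S :: ch) = true := by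
        rw [check, if_neg hb, List.all_eq_true] at hck
        have := hck S hSall
        have hor : (subM A S || subM (63 - A) S) = true := by
          rcases hsub with h | h <;> simp [h]
        rw [hor, hcols] at this
        simpa using this
      refine ih (S :: ch) hck' (fun B hB => hbl B (List.mem_cons_of_mem _ hB)) ?_
        (List.nodup_cons.mpr ⟨hSch, hnd⟩)
      intro m hm
      rcases List.mem_cons.mp hm with rfl | h
      · exact hPS
      · exact hch m h

def mval (b0 b1 b2 b3 b4 b5 : Bool) : ℕ :=
  b0.toNat + 2*b1.toNat + 4*b2.toNat + 8*b3.toNat + 16*b4.toNat + 32*b5.toNat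

theorem L_bit : ∀ b0 b1 b2 b3 b4 b5 : Bool, ∀ n, n < 6 →
    bitt n (mval b0 b1 b2 b3 b4 b5) = [b0,b1,b2,b3,b4,b5].getD n false := by decide

theorem L_sub : ∀ b0 b1 b2 b3 b4 b5 : Bool, ∀ A ∈ allSubs,
    (∀ n, n < 6 → bitt n A = true → [b0,b1,b2,b3,b4,b5].getD n false = true) →
    subM A (mval b0 b1 b2 b3 b4 b5) = true := by decide

theorem L_mem : ∀ b0 b1 b2 b3 b4 b5 : Bool,
    b0.toNat + b1.toNat + b2.toNat + b3.toNat + b4.toNat + b5.toNat ≤ 4 →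
    ∀ A ∈ allSubs, subM A (mval b0 b1 b2 b3 b4 b5) = true →
    mval b0 b1 b2 b3 b4 b5 ∈ allSubs := by decide

theorem L_compl : ∀ A ∈ splitsL, ∀ n, n < 6 → bitt n (63 - A) = !bitt n A := by decide

theorem L_splits_sub : ∀ A ∈ splitsL, A ∈ allSubs ∧ (63 - A) ∈ allSubs := by decide

theorem L_lt : ∀ e ∈ partsL, e.1 < 6 ∧ e.2.1 < 6 ∧ e.2.2.1 < 6 ∧ e.2.2.2.1 < 6 ∧
    e.2.2.2.2.1 < 6 ∧ e.2.2.2.2.2 < 6 := by decide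

theorem L_ne : ∀ e ∈ partsL, e.1 ≠ e.2.1 ∧ e.1 ≠ e.2.2.1 ∧ e.1 ≠ e.2.2.2.1 ∧
    e.1 ≠ e.2.2.2.2.1 ∧ e.1 ≠ e.2.2.2.2.2 ∧ e.2.1 ≠ e.2.2.1 ∧ e.2.1 ≠ e.2.2.2.1 ∧
    e.2.1 ≠ e.2.2.2.2.1 ∧ e.2.1 ≠ e.2.2.2.2.2 ∧ e.2.2.1 ≠ e.2.2.2.1 ∧
    e.2.2.1 ≠ e.2.2.2.2.1 ∧ e.2.2.1 ≠ e.2.2.2.2.2 ∧ e.2.2.2.1 ≠ e.2.2.2.2.1 ∧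
    e.2.2.2.1 ≠ e.2.2.2.2.2 ∧ e.2.2.2.2.1 ≠ e.2.2.2.2.2 := by decide

theorem L_all : ∀ e ∈ partsL, ∀ n, n < 6 → n = e.1 ∨ n = e.2.1 ∨ n = e.2.2.1 ∨
    n = e.2.2.2.1 ∨ n = e.2.2.2.2.1 ∨ n = e.2.2.2.2.2 := by decide

theorem L_bits1 : ∀ e ∈ partsL,
    bitt e.1 (mask4 e.1 e.2.1 e.2.2.1 e.2.2.2.1) = true ∧
    bitt e.2.1 (mask4 e.1 e.2.1 e.2.2.1 e.2.2.2.1) = true ∧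
    bitt e.2.2.1 (mask4 e.1 e.2.1 e.2.2.1 e.2.2.2.1) = true ∧
    bitt e.2.2.2.1 (mask4 e.1 e.2.1 e.2.2.1 e.2.2.2.1) = true ∧
    bitt e.2.2.2.2.1 (mask4 e.1 e.2.1 e.2.2.1 e.2.2.2.1) = false ∧
    bitt e.2.2.2.2.2 (mask4 e.1 e.2.1 e.2.2.1 e.2.2.2.1) = false := by decide

theorem L_bits2 : ∀ e ∈ partsL,
    bitt e.1 (mask4 e.1 e.2.1 e.2.2.1 e.2.2.2.2.1) = true ∧
    bitt e.2.1 (mask4 e.1 e.2.1 e.2.2.1 e.2.2.2.2.1) = true ∧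
    bitt e.2.2.1 (mask4 e.1 e.2.1 e.2.2.1 e.2.2.2.2.1) = true ∧
    bitt e.2.2.2.1 (mask4 e.1 e.2.1 e.2.2.1 e.2.2.2.2.1) = false ∧
    bitt e.2.2.2.2.1 (mask4 e.1 e.2.1 e.2.2.1 e.2.2.2.2.1) = true ∧
    bitt e.2.2.2.2.2 (mask4 e.1 e.2.1 e.2.2.1 e.2.2.2.2.1) = false := by decide

theorem L_bits3 : ∀ e ∈ partsL,
    bitt e.1 (mask4 e.1 e.2.1 e.2.2.1 e.2.2.2.2.2) = true ∧
    bitt e.2.1 (mask4 e.1 e.2.1 e.2.2.1 e.2.2.2.2.2) = true ∧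
    bitt e.2.2.1 (mask4 e.1 e.2.1 e.2.2.1 e.2.2.2.2.2) = true ∧
    bitt e.2.2.2.1 (mask4 e.1 e.2.1 e.2.2.1 e.2.2.2.2.2) = false ∧
    bitt e.2.2.2.2.1 (mask4 e.1 e.2.1 e.2.2.1 e.2.2.2.2.2) = false ∧
    bitt e.2.2.2.2.2 (mask4 e.1 e.2.1 e.2.2.1 e.2.2.2.2.2) = true := by decide

theorem L_mne : ∀ e ∈ partsL,
    mask4 e.1 e.2.1 e.2.2.1 e.2.2.2.1 ≠ mask4 e.1 e.2.1 e.2.2.1 e.2.2.2.2.1 ∧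
    mask4 e.1 e.2.1 e.2.2.1 e.2.2.2.1 ≠ mask4 e.1 e.2.1 e.2.2.1 e.2.2.2.2.2 ∧
    mask4 e.1 e.2.1 e.2.2.1 e.2.2.2.2.1 ≠ mask4 e.1 e.2.1 e.2.2.1 e.2.2.2.2.2 := by decide

theorem L_splits_ne : ∀ A ∈ splitsL, (∃ n, n < 6 ∧ bitt n A = true) ∧
    (∃ n, n < 6 ∧ bitt n (63 - A) = true) := by decide

theorem toNat_decide (P : Prop) [Decidable P] : (decide P).toNat = if P then 1 else 0 := by
  by_cases h : P <;> simp [h]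

theorem triple_eq {s : Finset ℕ+} {a b c : ℕ+} (hcard : s.card = 3)
    (ha : a ∈ s) (hb : b ∈ s) (hc : c ∈ s) (hab : a ≠ b) (hac : a ≠ c) (hbc : b ≠ c) :
    s = ({a, b, c} : Finset ℕ+) := by
  have hsub : ({a, b, c} : Finset ℕ+) ⊆ s := by
    intro x hx
    rcases Finset.mem_insert.mp hx with rfl | hx
    · exact ha
    rcases Finset.mem_insert.mp hx with rfl | hx
    · exact hb
    rw [Finset.mem_singleton] at hx
    subst hx; exact hc
  have hcard3 : ({a, b, c} : Finset ℕ+).card = 3 := by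
    rw [Finset.card_insert_of_notMem (by simp [hab, hac]),
      Finset.card_insert_of_notMem (by simp [hbc]), Finset.card_singleton]
  exact (Finset.eq_of_subset_of_card_le hsub (by omega)).symm

section Key

variable (t : Fin 6 → Finset ℕ+)

/-- mask of supports -/
def msk (x : ℕ+) : ℕ :=
  mval (decide (x ∈ t 0)) (decide (x ∈ t 1)) (decide (x ∈ t 2))
    (decide (x ∈ t 3)) (decide (x ∈ t 4)) (decide (x ∈ t 5))

theorem getD_eq (x : ℕ+) : ∀ n, (hn : n < 6) →
    [decide (x ∈ t 0), decide (x ∈ t 1), decide (x ∈ t 2), decide (x ∈ t 3),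
      decide (x ∈ t 4), decide (x ∈ t 5)].getD n false = decide (x ∈ t ⟨n, hn⟩) := by
  intro n hn
  interval_cases n <;> rfl

theorem bitt_msk (x : ℕ+) : ∀ n, (hn : n < 6) →
    bitt n (msk t x) = decide (x ∈ t ⟨n, hn⟩) := by
  intro n hn
  rw [msk, L_bit _ _ _ _ _ _ n hn, getD_eq]

theorem key (hT3 : ∀ n, (t n).card = 3)
    (hfair : ∀ x : ℕ+, (∃ n, x ∈ t n) →
      2 ≤ Multiset.card (Multiset.filter (fun tt => x ∉ tt) (∑ n : Fin 6, {t n})))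
    (hcol : ¬∃ f : Fin 2 → Multiset (Finset ℕ+),
      NiceColoring 2 (∑ n : Fin 6, {t n}) f) :
    Special (∑ n : Fin 6, ({t n} : Multiset (Finset ℕ+))) := by
  set T' : Multiset (Finset ℕ+) := ∑ n : Fin 6, {t n} with hT'
  have mem_T' : ∀ tt : Finset ℕ+, tt ∈ T' ↔ ∃ n, tt = t n := by
    intro tt
    rw [hT', Multiset.mem_sum]
    simp
  have card_T' : Multiset.card T' = 6 := by
    rw [hT']
    simp [Fin.sum_univ_six]
  -- the bound on support sizes
  have hb4 : ∀ x : ℕ+, (∃ n, x ∈ t n) →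
      (decide (x ∈ t 0)).toNat + (decide (x ∈ t 1)).toNat + (decide (x ∈ t 2)).toNat +
      (decide (x ∈ t 3)).toNat + (decide (x ∈ t 4)).toNat + (decide (x ∈ t 5)).toNat ≤ 4 := by
    intro x hx
    have h2 := hfair x hx
    have hsplit : Multiset.card (Multiset.filter (fun tt => x ∈ tt) T') +
        Multiset.card (Multiset.filter (fun tt => x ∉ tt) T') = 6 := by
      rw [← Multiset.card_add, Multiset.filter_add_not, card_T']
    have hin : Multiset.card (Multiset.filter (fun tt => x ∈ tt) T') =
        (decide (x ∈ t 0)).toNat + (decide (x ∈ t 1)).toNat + (decide (x ∈ t 2)).toNat +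
        (decide (x ∈ t 3)).toNat + (decide (x ∈ t 4)).toNat + (decide (x ∈ t 5)).toNat := by
      rw [hT']
      simp only [Fin.sum_univ_six, Multiset.filter_add, Multiset.filter_singleton,
        Multiset.card_add, apply_ite Multiset.card, Multiset.card_singleton,
        Multiset.card_zero, Multiset.empty_eq_zero, toNat_decide]
    omega
  -- the predicate
  set P : ℕ → Prop := fun m => (∃ x : ℕ+, (∃ n, x ∈ t n) ∧ msk t x = m) ∧ m ∈ allSubs
    with hP
  have h1 : ∀ m, P m → m ∈ allSubs := fun m hm => hm.2
  have h2 : ∀ i, i < 6 → ∀ l : List ℕ, l.Nodup →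
      (∀ m ∈ l, P m ∧ bitt i m = true) → l.length ≤ 3 := by
    intro i hi l hnd hl
    classical
    set g : ℕ → ℕ+ := fun m =>
      if h : ∃ x : ℕ+, (∃ n, x ∈ t n) ∧ msk t x = m then h.choose else 1 with hg
    have hgm : ∀ m ∈ l, msk t (g m) = m := by
      intro m hm
      have := (hl m hm).1.1
      rw [hg]
      simp only [dif_pos this]
      exact this.choose_spec.2
    have hmem : ∀ m ∈ l, g m ∈ t ⟨i, hi⟩ := by
      intro m hm
      have hbit := (hl m hm).2
      rw [← hgm m hm, bitt_msk t _ i hi] at hbit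
      exact of_decide_eq_true hbit
    have hinj : Set.InjOn g l.toFinset := by
      intro m1 hm1 m2 hm2 heq
      rw [Finset.mem_coe, List.mem_toFinset] at hm1 hm2
      rw [← hgm m1 hm1, ← hgm m2 hm2, heq]
    have hcard := Finset.card_le_card_of_injOn g
      (fun m hm => hmem m (List.mem_toFinset.mp hm)) hinj
    rw [List.toFinset_card_of_nodup hnd] at hcard
    rw [hT3 ⟨i, hi⟩] at hcard
    exact hcard
  -- blocking
  have h3 : ∀ A ∈ splitsL, (∃ m, P m ∧ subM A m = true) ∨
      (∃ m, P m ∧ subM (63-A) m = true) := by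
    intro A hA
    set s : Finset (Fin 6) := Finset.univ.filter (fun n : Fin 6 => bitt n.1 A = true)
      with hs
    set f : Fin 2 → Multiset (Finset ℕ+) :=
      fun j => if j.val = 0 then ∑ n ∈ s, {t n} else ∑ n ∈ sᶜ, {t n} with hf
    have hsum : ∑ j, f j = T' := by
      rw [Fin.sum_univ_two, hf]
      norm_num
      rw [Finset.sum_add_sum_compl]
    have hnice := hcol
    push_neg at hnice
    have hfail := hnice f
    rw [NiceColoring] at hfail
    push_neg at hfail
    obtain ⟨j, x, happ, hall⟩ := hfail hsum
    have happ' : ∃ n, x ∈ t n := by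
      obtain ⟨tt, htt, hxt⟩ := happ
      obtain ⟨n, rfl⟩ := (mem_T' tt).mp htt
      exact ⟨n, hxt⟩
    have hmsub : msk t x ∈ allSubs → P (msk t x) := fun h => ⟨⟨x, happ', rfl⟩, h⟩
    rcases j with ⟨jv, hjv⟩
    interval_cases jv
    · -- covers side A
      left
      have hball : ∀ tt ∈ (∑ n ∈ s, ({t n} : Multiset (Finset ℕ+))), x ∈ tt := by
        intro tt htt
        apply hall
        rw [hf]
        simpa using htt
      have hcov : ∀ n, (hn : n < 6) → bitt n A = true → x ∈ t ⟨n, hn⟩ := by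
        intro n hn hb
        apply hball
        rw [Multiset.mem_sum]
        exact ⟨⟨n, hn⟩, by rw [hs]; simp [hb], Multiset.mem_singleton_self _⟩
      have hsubm : subM A (msk t x) = true := by
        apply L_sub _ _ _ _ _ _ A (L_splits_sub A hA).1
        intro n hn hb
        rw [getD_eq _ _ _ hn]
        exact decide_eq_true (hcov n hn hb)
      exact ⟨msk t x, hmsub (L_mem _ _ _ _ _ _ (hb4 x happ') A
        (L_splits_sub A hA).1 hsubm), hsubm⟩
    · -- covers side 63 - A
      right
      have hball : ∀ tt ∈ (∑ n ∈ sᶜ, ({t n} : Multiset (Finset ℕ+))), x ∈ tt := by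
        intro tt htt
        apply hall
        rw [hf]
        simpa using htt
      have hcov : ∀ n, (hn : n < 6) → bitt n (63 - A) = true → x ∈ t ⟨n, hn⟩ := by
        intro n hn hb
        apply hball
        rw [Multiset.mem_sum]
        refine ⟨⟨n, hn⟩, ?_, Multiset.mem_singleton_self _⟩
        rw [Finset.mem_compl, hs]
        have hcmp := L_compl A hA n hn
        rw [hcmp] at hb
        simp only [Finset.mem_filter, Finset.mem_univ, true_and]
        intro hcon
        rw [hcon] at hb
        simp at hb
      have hsubm : subM (63 - A) (msk t x) = true := by
        apply L_sub _ _ _ _ _ _ (63 - A) (L_splits_sub A hA).2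
        intro n hn hb
        rw [getD_eq _ _ _ hn]
        exact decide_eq_true (hcov n hn hb)
      exact ⟨msk t x, hmsub (L_mem _ _ _ _ _ _ (hb4 x happ') (63 - A)
        (L_splits_sub A hA).2 hsubm), hsubm⟩
  -- apply the search
  obtain ⟨e, he, hP1, hP2, hP3⟩ := check_complete P h1 h2 splitsL [] check_true h3
    (by intro m hm; simp at hm) List.nodup_nil
  obtain ⟨hi6, hj6, hk6, hp6, hq6, hr6⟩ := L_lt e he
  obtain ⟨hij, hik, hip, hiq, hir, hjk, hjp, hjq, hjr, hkp, hkq, hkr, hpq, hpr, hqr⟩ :=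
    L_ne e he
  set I : Fin 6 := ⟨e.1, hi6⟩
  set J : Fin 6 := ⟨e.2.1, hj6⟩
  set K : Fin 6 := ⟨e.2.2.1, hk6⟩
  set Pp : Fin 6 := ⟨e.2.2.2.1, hp6⟩
  set Q : Fin 6 := ⟨e.2.2.2.2.1, hq6⟩
  set R : Fin 6 := ⟨e.2.2.2.2.2, hr6⟩
  obtain ⟨a, hap, hma⟩ := hP1.1
  obtain ⟨b, hbp, hmb⟩ := hP2.1
  obtain ⟨c, hcp, hmc⟩ := hP3.1
  -- membership facts
  have hbit : ∀ (x : ℕ+) (n : ℕ) (hn : n < 6) (m : ℕ), msk t x = m →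
      (bitt n m = true → x ∈ t ⟨n, hn⟩) ∧ (bitt n m = false → x ∉ t ⟨n, hn⟩) := by
    intro x n hn m hm
    constructor
    · intro h; rw [← hm, bitt_msk t x n hn] at h; exact of_decide_eq_true h
    · intro h hx
      rw [← hm, bitt_msk t x n hn] at h
      rw [decide_eq_true hx] at h
      simp at h
  obtain ⟨b1i, b1j, b1k, b1p, b1q, b1r⟩ := L_bits1 e he
  obtain ⟨b2i, b2j, b2k, b2p, b2q, b2r⟩ := L_bits2 e he
  obtain ⟨b3i, b3j, b3k, b3p, b3q, b3r⟩ := L_bits3 e he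
  have haI : a ∈ t I := (hbit a _ hi6 _ hma).1 b1i
  have haJ : a ∈ t J := (hbit a _ hj6 _ hma).1 b1j
  have haK : a ∈ t K := (hbit a _ hk6 _ hma).1 b1k
  have haP : a ∈ t Pp := (hbit a _ hp6 _ hma).1 b1p
  have haQ : a ∉ t Q := (hbit a _ hq6 _ hma).2 b1q
  have haR : a ∉ t R := (hbit a _ hr6 _ hma).2 b1r
  have hbI : b ∈ t I := (hbit b _ hi6 _ hmb).1 b2i
  have hbJ : b ∈ t J := (hbit b _ hj6 _ hmb).1 b2j
  have hbK : b ∈ t K := (hbit b _ hk6 _ hmb).1 b2k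
  have hbP : b ∉ t Pp := (hbit b _ hp6 _ hmb).2 b2p
  have hbQ : b ∈ t Q := (hbit b _ hq6 _ hmb).1 b2q
  have hbR : b ∉ t R := (hbit b _ hr6 _ hmb).2 b2r
  have hcI : c ∈ t I := (hbit c _ hi6 _ hmc).1 b3i
  have hcJ : c ∈ t J := (hbit c _ hj6 _ hmc).1 b3j
  have hcK : c ∈ t K := (hbit c _ hk6 _ hmc).1 b3k
  have hcP : c ∉ t Pp := (hbit c _ hp6 _ hmc).2 b3p
  have hcQ : c ∉ t Q := (hbit c _ hq6 _ hmc).2 b3q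
  have hcR : c ∈ t R := (hbit c _ hr6 _ hmc).1 b3r
  obtain ⟨hm12, hm13, hm23⟩ := L_mne e he
  have hab : a ≠ b := by
    intro h; apply hm12; rw [← hma, ← hmb, h]
  have hac : a ≠ c := by
    intro h; apply hm13; rw [← hma, ← hmc, h]
  have hbc : b ≠ c := by
    intro h; apply hm23; rw [← hmb, ← hmc, h]
  -- the three common triples
  have htI : t I = ({a, b, c} : Finset ℕ+) := triple_eq (hT3 I) haI hbI hcI hab hac hbc
  have htJ : t J = ({a, b, c} : Finset ℕ+) := triple_eq (hT3 J) haJ hbJ hcJ hab hac hbc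
  have htK : t K = ({a, b, c} : Finset ℕ+) := triple_eq (hT3 K) haK hbK hcK hab hac hbc
  -- Fin-level distinctness
  have fij : I ≠ J := Fin.ne_of_val_ne hij
  have fik : I ≠ K := Fin.ne_of_val_ne hik
  have fip : I ≠ Pp := Fin.ne_of_val_ne hip
  have fiq : I ≠ Q := Fin.ne_of_val_ne hiq
  have fir : I ≠ R := Fin.ne_of_val_ne hir
  have fjk : J ≠ K := Fin.ne_of_val_ne hjk
  have fjp : J ≠ Pp := Fin.ne_of_val_ne hjp
  have fjq : J ≠ Q := Fin.ne_of_val_ne hjq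
  have fjr : J ≠ R := Fin.ne_of_val_ne hjr
  have fkp : K ≠ Pp := Fin.ne_of_val_ne hkp
  have fkq : K ≠ Q := Fin.ne_of_val_ne hkq
  have fkr : K ≠ R := Fin.ne_of_val_ne hkr
  have fpq : Pp ≠ Q := Fin.ne_of_val_ne hpq
  have fpr : Pp ≠ R := Fin.ne_of_val_ne hpr
  have fqr : Q ≠ R := Fin.ne_of_val_ne hqr
  set KS : Finset (Fin 6) := {I, J, K} with hKS
  have hKc : KSᶜ = ({Pp, Q, R} : Finset (Fin 6)) := by
    ext n
    have hn6 := n.2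
    have := L_all e he n.1 hn6
    simp only [Finset.mem_compl, hKS, Finset.mem_insert, Finset.mem_singleton]
    rcases this with h | h | h | h | h | h
    · have hee : n = I := Fin.ext h
      subst hee
      simp [fij.symm, fik.symm, fip, fiq, fir]
    · have hee : n = J := Fin.ext h
      subst hee
      simp [fij, fjk.symm, fjp, fjq, fjr]
    · have hee : n = K := Fin.ext h
      subst hee
      simp [fik, fjk, fkp, fkq, fkr]
    · have hee : n = Pp := Fin.ext h
      subst hee
      simp [fip.symm, fjp.symm, fkp.symm, fpq, fpr]
    · have hee : n = Q := Fin.ext h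
      subst hee
      simp [fiq.symm, fjq.symm, fkq.symm, fpq.symm, fqr]
    · have hee : n = R := Fin.ext h
      subst hee
      simp [fir.symm, fjr.symm, fkr.symm, fpr.symm, fqr.symm]
  have hsplit : T' = Multiset.replicate 3 ({a, b, c} : Finset ℕ+) +
      {t Pp, t Q, t R} := by
    rw [hT', ← Finset.sum_add_sum_compl KS (fun n => ({t n} : Multiset (Finset ℕ+)))]
    congr 1
    · rw [hKS]
      rw [Finset.sum_insert (by simp [fij, fik]),
        Finset.sum_insert (by simp [fjk]), Finset.sum_singleton]
      rw [htI, htJ, htK]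
      rfl
    · rw [hKc]
      rw [Finset.sum_insert (by simp [fpq, fpr]),
        Finset.sum_insert (by simp [fqr]), Finset.sum_singleton]
      rfl
  refine ⟨a, b, c, hab, hac, hbc, t Pp, t Q, t R, ?_, haP, hbP, hcP, ?_, hbQ, hcQ,
    ?_, ?_, hcR⟩
  · rw [card_T', show (6:ℕ) - 3 = 3 from rfl]
    exact hsplit
  · exact haQ
  · exact haR
  · exact hbR

end Key

end SixTriples

/-- Every fair non-special finite multiset of exactly `6` triples admits a nice
two-coloring. -/
theorem nice_two_coloring_of_six_triples
    (T : Multiset (Finset ℕ+)) (hT : ∀ t ∈ T, t.card = 3)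
    (hn : Multiset.card T = 6)
    (hfair : CFair 2 T) (hns : ¬ Special T) :
    ∃ f : Fin 2 → Multiset (Finset ℕ+), NiceColoring 2 T f := by
  by_contra hcol
  obtain ⟨l, hl⟩ := Quotient.exists_rep T
  have hlen : l.length = 6 := by
    rw [← hl] at hn
    simpa using hn
  rcases l with _ | ⟨u0, _ | ⟨u1, _ | ⟨u2, _ | ⟨u3, _ | ⟨u4, _ | ⟨u5, _ | ⟨u6, l⟩⟩⟩⟩⟩⟩⟩ <;>
    simp only [List.length_cons, List.length_nil] at hlen <;> try omega
  have hl' : ([u0, u1, u2, u3, u4, u5] : Multiset (Finset ℕ+)) = T := hl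
  subst hl'
  set t : Fin 6 → Finset ℕ+ := ![u0, u1, u2, u3, u4, u5] with ht
  have hTeq : ([u0, u1, u2, u3, u4, u5] : Multiset (Finset ℕ+)) =
      ∑ n : Fin 6, {t n} := by
    rw [Fin.sum_univ_six]
    rfl
  have ht3 : ∀ n, (t n).card = 3 := by
    intro n
    apply hT
    rw [hTeq, Multiset.mem_sum]
    exact ⟨n, Finset.mem_univ n, Multiset.mem_singleton_self _⟩
  have hfair' : ∀ x : ℕ+, (∃ n, x ∈ t n) →
      2 ≤ Multiset.card (Multiset.filter (fun tt => x ∉ tt) (∑ n : Fin 6, {t n})) := by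
    intro x hx
    obtain ⟨n, hxn⟩ := hx
    rw [← hTeq]
    apply hfair
    refine ⟨t n, ?_, hxn⟩
    rw [hTeq, Multiset.mem_sum]
    exact ⟨n, Finset.mem_univ n, Multiset.mem_singleton_self _⟩
  have hcol' : ¬∃ f : Fin 2 → Multiset (Finset ℕ+),
      NiceColoring 2 (∑ n : Fin 6, {t n}) f := by
    rw [← hTeq]
    exact hcol
  apply hns
  rw [hTeq]
  exact SixTriples.key t ht3 hfair' hcol'
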